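/- arXiv:0801.3328 — 5 statements merged into one kernel-verified Lean document; each statement's English description precedes it below -/
import Mathlib

section
/- Let ψ = (P₁,…,P_p) : ℝ^m → ℝ^p with each Pᵢ weighted-homogeneous of degree α > 0 with positive weights. Fix s ∈ ℝ^p \ {0} and let X_s = {x ∈ ℝ^m : sⱼPᵢ(x) = sᵢPⱼ(x) for all i,j} (the fiber of the blow-up). Then for any x ∈ X_s with x ≠ 0 and such that X_s is a C¹ submanifold near x, the sphere of radius ‖x‖ centered at 0 is transversal to X_s at x; equivalently, the position vector x is not orthogonal to the tangent space of X_s at x. -/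
open scoped RealInnerProductSpace
open Set Filter Topology

/-! The weighted dilations `t ↦ (t ^ w j * x j)_j` preserve every fiber `X_s`, so the curve they
trace through `x` lies in `X_s` and its velocity at `t = 1`, the Euler vector `(w j * x j)_j`,
is tangent to `X_s` at `x`. With positive weights, `⟪(w j * x j)_j, x⟫ = ∑ j, w j * x j ^ 2 > 0`
for `x ≠ 0`, so this tangent vector is not orthogonal to `x`. -/

theorem mem_tangentConeAt_of_hasDerivAt {𝕜 E : Type*} [NontriviallyNormedField 𝕜]
    [NormedAddCommGroup E] [NormedSpace 𝕜 E] {γ : 𝕜 → E} {v : E} {t : 𝕜} {U : Set 𝕜}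
    {S : Set E} (hU : U ∈ 𝓝 t) (hγ : HasDerivAt γ v t) (hUS : MapsTo γ U S) :
    v ∈ tangentConeAt 𝕜 S (γ t) := by
  have hone : (1 : 𝕜) ∈ tangentConeAt 𝕜 U t := by simp [tangentConeAt_of_mem_nhds hU]
  have hv : v ∈ tangentConeAt 𝕜 (γ '' U) (γ t) := by
    simpa using hγ.hasFDerivAt.hasFDerivWithinAt.mapsTo_tangent_cone hone
  exact tangentConeAt_mono hUS.image_subset hv

section BlowupFiber

variable {X ι R : Type*} [CommRing R]

def blowupFiber (P : ι → X → R) (s : ι → R) : Set X :=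
  {x | ∀ i j, s j * P i x = s i * P j x}

theorem map_mem_blowupFiber {P : ι → X → R} {s : ι → R} {g : X → X} {c : R} {x : X}
    (hg : ∀ i, P i (g x) = c * P i x) (hx : x ∈ blowupFiber P s) :
    g x ∈ blowupFiber P s := fun i j => by
  rw [hg i, hg j]
  linear_combination c * hx i j

end BlowupFiber

section WeightedDilation

variable {ι : Type*} (w : ι → ℝ) (x : EuclideanSpace ℝ ι)

noncomputable def weightedDilation (t : ℝ) : EuclideanSpace ℝ ι :=
  WithLp.toLp 2 (fun j => t ^ w j * x j)

def eulerVector : EuclideanSpace ℝ ι :=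
  WithLp.toLp 2 (fun j => w j * x j)

@[simp]
theorem weightedDilation_one : weightedDilation w x 1 = x := by
  ext j
  simp [weightedDilation]

theorem hasDerivAt_weightedDilation_one [Fintype ι] :
    HasDerivAt (weightedDilation w x) (eulerVector w x) 1 := by
  have hcoord : HasDerivAt (fun t : ℝ => fun j => t ^ w j * x j) (fun j => w j * x j) 1 := by
    refine hasDerivAt_pi.mpr fun j => ?_
    simpa using (Real.hasDerivAt_rpow_const (p := w j) (Or.inl one_ne_zero)).mul_const (x j)
  exact (PiLp.continuousLinearEquiv 2 ℝ (fun _ : ι => ℝ)).symm.hasFDerivAt.comp_hasDerivAt 1 hcoord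

variable {w x}

theorem inner_eulerVector_self_pos [Fintype ι] (hw : ∀ j, 0 < w j) (hx : x ≠ 0) :
    0 < ⟪eulerVector w x, x⟫ := by
  obtain ⟨j₀, hj₀⟩ : ∃ j, x j ≠ 0 := by
    by_contra! h
    exact hx (by ext j; simpa using h j)
  have hinner : ⟪eulerVector w x, x⟫ = ∑ j, w j * (x j * x j) := by
    simp [eulerVector, PiLp.inner_apply, mul_left_comm]
  rw [hinner]
  exact Finset.sum_pos' (fun j _ => mul_nonneg (hw j).le (mul_self_nonneg _))
    ⟨j₀, Finset.mem_univ _, mul_pos (hw j₀) (mul_self_pos.mpr hj₀)⟩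

end WeightedDilation

theorem sphere_transversal_to_fiber_general (m p : ℕ) (w : Fin m → ℝ) (hw : ∀ i, 0 < w i)
    (α : ℝ)
    (P : Fin p → EuclideanSpace ℝ (Fin m) → ℝ)
    (hhom : ∀ i, ∀ t : ℝ, 0 < t → ∀ x : EuclideanSpace ℝ (Fin m),
      P i (WithLp.toLp 2 (fun j => t ^ (w j) * x j)) = t ^ α * P i x)
    (s : Fin p → ℝ)
    (Xs : Set (EuclideanSpace ℝ (Fin m)))
    (hXs : Xs = {x | ∀ i j, s j * P i x = s i * P j x})
    (x : EuclideanSpace ℝ (Fin m)) (hxX : x ∈ Xs) (hx : x ≠ 0) :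
    ¬ (tangentConeAt ℝ Xs x ⊆ {v | ⟪v, x⟫ = 0}) := by
  subst hXs
  intro horth
  have hcurve : MapsTo (weightedDilation w x) (Ioi 0) (blowupFiber P s) :=
    fun t ht => map_mem_blowupFiber (g := (weightedDilation w · t)) (fun i => hhom i t ht x) hxX
  have htangent := mem_tangentConeAt_of_hasDerivAt (Ioi_mem_nhds one_pos)
    (hasDerivAt_weightedDilation_one w x) hcurve
  rw [weightedDilation_one] at htangent
  exact (inner_eulerVector_self_pos hw hx).ne' (horth htangent)

/-- the sphere through `x` is transversal to `X_s` at `x ≠ 0`: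
the tangent space (tangent cone) of `X_s` at `x` is not contained in `x^⊥`. -/
theorem sphere_transversal_to_fiber (m p : ℕ) (w : Fin m → ℝ) (hw : ∀ i, 0 < w i)
    (α : ℝ) (hα : 0 < α)
    (P : Fin p → EuclideanSpace ℝ (Fin m) → ℝ) (hP : ∀ i, ContDiff ℝ 1 (P i))
    (hhom : ∀ i, ∀ t : ℝ, 0 < t → ∀ x : EuclideanSpace ℝ (Fin m),
      P i (WithLp.toLp 2 (fun j => t ^ (w j) * x j)) = t ^ α * P i x)
    (s : Fin p → ℝ) (hs : s ≠ 0)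
    (Xs : Set (EuclideanSpace ℝ (Fin m)))
    (hXs : Xs = {x | ∀ i j, s j * P i x = s i * P j x})
    (x : EuclideanSpace ℝ (Fin m)) (hxX : x ∈ Xs) (hx : x ≠ 0) :
    ¬ (tangentConeAt ℝ Xs x ⊆ {v | ⟪v, x⟫ = 0}) :=
  sphere_transversal_to_fiber_general m p w hw α P hhom s Xs hXs x hxX hx
end

section
/- Let P, Q : ℝ^m → ℝ be C¹ and set ψ = (P,Q), V = ψ⁻¹(0), and ω(x) = P(x)∇Q(x) − Q(x)∇P(x). For x ∉ V with x ≠ 0, the map ψ/‖ψ‖ restricted to the sphere through x (of radius ‖x‖) is a submersion at x if and only if the vectors ω(x) and x are linearly independent. -/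
open scoped RealInnerProductSpace

/-!
Write `Φ = N ∘ ψ` with `N z = ‖z‖⁻¹ • z`. In the plane, `DN(z)` is the rank-one map
`y ↦ ‖z‖⁻³ ⟪J z, y⟫ • J z`, where `J` is the rotation by a right angle, and
`⟪J (ψ x), Dψ(x) v⟫ = P(x) dQ(v) - Q(x) dP(v) = ⟪ω x, v⟫`. Hence `DΦ(x) v = ⟪ω x, v⟫ • n` for a
vector `n` spanning the tangent line `(ℝ ∙ Φ x)ᗮ` of the circle, so `DΦ(x)` maps `x`'s orthogonal
complement onto that line iff `⟪ω x, ·⟫` does not vanish on it, i.e. iff `ω x ∉ ℝ ∙ x`.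
-/

section Normalize

variable {F : Type*} [NormedAddCommGroup F] [InnerProductSpace ℝ F]

theorem hasFDerivAt_norm_inv_smul {z : F} (hz : z ≠ 0) :
    HasFDerivAt (fun y : F => ‖y‖⁻¹ • y)
      (‖z‖⁻¹ • (ContinuousLinearMap.id ℝ F - (‖z‖ ^ 2)⁻¹ • (innerSL ℝ z).smulRight z)) z := by
  have hnorm : HasFDerivAt (fun y : F => ‖y‖) (‖z‖⁻¹ • innerSL ℝ z) z := by
    have := (hasStrictFDerivAt_norm_sq z).hasFDerivAt.sqrt (by positivity)
    simp only [Real.sqrt_sq (norm_nonneg _)] at this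
    refine this.congr_fderiv ?_
    ext v
    simp only [one_div, mul_inv_rev, smul_apply, coe_innerSL_apply, nsmul_eq_mul, Nat.cast_ofNat,
      smul_eq_mul]
    field_simp
  refine (((hasDerivAt_inv (norm_ne_zero_iff.mpr hz)).comp_hasFDerivAt z hnorm).smul
    (hasFDerivAt_id z)).congr_fderiv ?_
  ext v
  simp only [Function.comp_apply, neg_smul, id_eq, add_apply, smul_apply,
    ContinuousLinearMap.id_apply, ContinuousLinearMap.smulRight_apply, neg_apply,
    coe_innerSL_apply, smul_eq_mul, sub_apply]
  module

end Normalize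

def rightAngleRot (z : EuclideanSpace ℝ (Fin 2)) : EuclideanSpace ℝ (Fin 2) := !₂[-z 1, z 0]

section Plane

variable (z y : EuclideanSpace ℝ (Fin 2))

theorem norm_sq_eq_fin_two : ‖z‖ ^ 2 = z 0 ^ 2 + z 1 ^ 2 := by
  simp [EuclideanSpace.norm_sq_eq, Fin.sum_univ_two]

theorem inner_rightAngleRot_left : ⟪rightAngleRot z, y⟫ = z 0 * y 1 - z 1 * y 0 := by
  simp only [rightAngleRot, PiLp.inner_apply, RCLike.inner_apply, Real.ringHom_apply,
    Fin.sum_univ_two, Matrix.cons_val_zero, Matrix.cons_val_one, Matrix.cons_val_fin_one]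
  ring

theorem inner_rightAngleRot_self : ⟪rightAngleRot z, z⟫ = 0 := by
  rw [inner_rightAngleRot_left]; ring

theorem norm_rightAngleRot : ‖rightAngleRot z‖ = ‖z‖ := by
  rw [← sq_eq_sq₀ (norm_nonneg _) (norm_nonneg _), norm_sq_eq_fin_two, norm_sq_eq_fin_two]
  simp only [rightAngleRot, Matrix.cons_val_zero, Matrix.cons_val_one, Matrix.cons_val_fin_one]
  ring

theorem norm_sq_smul_eq_inner_smul_add_inner_rightAngleRot_smul :
    ‖z‖ ^ 2 • y = ⟪z, y⟫ • z + ⟪rightAngleRot z, y⟫ • rightAngleRot z := by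
  rw [norm_sq_eq_fin_two, inner_rightAngleRot_left]
  ext i
  fin_cases i <;> simp [rightAngleRot, PiLp.inner_apply, Fin.sum_univ_two] <;> ring

variable {z}

theorem rightAngleRot_ne_zero (hz : z ≠ 0) : rightAngleRot z ≠ 0 := by
  rw [← norm_ne_zero_iff, norm_rightAngleRot, norm_ne_zero_iff]
  exact hz

theorem orthogonal_span_singleton_eq_span_rightAngleRot (hz : z ≠ 0) :
    (ℝ ∙ z)ᗮ = ℝ ∙ rightAngleRot z := by
  have hz2 : ‖z‖ ^ 2 ≠ 0 := by positivity
  ext u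
  rw [Submodule.mem_orthogonal_singleton_iff_inner_right, Submodule.mem_span_singleton]
  constructor
  · intro h
    refine ⟨(‖z‖ ^ 2)⁻¹ * ⟪rightAngleRot z, u⟫, ?_⟩
    rw [mul_smul, ← smul_right_inj hz2, smul_inv_smul₀ hz2,
      norm_sq_smul_eq_inner_smul_add_inner_rightAngleRot_smul z u, h, zero_smul, zero_add]
  · rintro ⟨a, rfl⟩
    rw [inner_smul_right, real_inner_comm, inner_rightAngleRot_self, mul_zero]

theorem hasFDerivAt_norm_inv_smul_fin_two (hz : z ≠ 0) :
    HasFDerivAt (fun y : EuclideanSpace ℝ (Fin 2) => ‖y‖⁻¹ • y)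
      ((‖z‖ ^ 3)⁻¹ • (innerSL ℝ (rightAngleRot z)).smulRight (rightAngleRot z)) z := by
  refine (hasFDerivAt_norm_inv_smul hz).congr_fderiv ?_
  refine ContinuousLinearMap.ext fun y => ?_
  have := norm_sq_smul_eq_inner_smul_add_inner_rightAngleRot_smul z y
  simp only [smul_apply, sub_apply, ContinuousLinearMap.id_apply,
    ContinuousLinearMap.smulRight_apply, coe_innerSL_apply]
  rw [eq_sub_of_add_eq' this.symm]
  match_scalars <;> field_simp

end Plane

theorem fderiv_euclidean_apply {H ι : Type*} [NormedAddCommGroup H] [NormedSpace ℝ H] [Fintype ι]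
    {f : H → EuclideanSpace ℝ ι} {y : H} (hf : DifferentiableAt ℝ f y) (i : ι) (v : H) :
    fderiv ℝ f y v i = fderiv ℝ (fun x => f x i) y v := by
  rw [((PiLp.hasFDerivAt_apply 2 (f y) i).comp y hf.hasFDerivAt).fderiv (f := fun x => f x i)]
  rfl

section Independence

variable {E : Type*} [NormedAddCommGroup E] [InnerProductSpace ℝ E] {w x : E}

theorem exists_inner_eq_zero_inner_ne_zero_iff (hx : x ≠ 0) :
    (∃ v, ⟪v, x⟫ = 0 ∧ ⟪w, v⟫ ≠ 0) ↔ LinearIndependent ℝ ![w, x] := by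
  rw [LinearIndependent.pair_symm_iff, LinearIndependent.pair_iff' hx, ← not_iff_not]
  push Not
  rw [← Submodule.mem_span_singleton, ← Submodule.orthogonal_orthogonal (ℝ ∙ x),
    Submodule.mem_orthogonal]
  simp only [Submodule.mem_orthogonal_singleton_iff_inner_left, real_inner_comm w]

theorem forall_mem_span_singleton_exists_inner_smul_eq_iff {F : Type*} [AddCommGroup F]
    [Module ℝ F] {n : F} (hn : n ≠ 0) (hx : x ≠ 0) :
    (∀ u ∈ ℝ ∙ n, ∃ v, ⟪v, x⟫ = 0 ∧ ⟪w, v⟫ • n = u) ↔ LinearIndependent ℝ ![w, x] := by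
  rw [← exists_inner_eq_zero_inner_ne_zero_iff hx]
  constructor
  · intro h
    obtain ⟨v, hvx, hvn⟩ := h n (Submodule.mem_span_singleton_self n)
    exact ⟨v, hvx, fun h0 => hn (by rw [← hvn, h0, zero_smul])⟩
  · rintro ⟨v, hvx, hwv⟩ u hu
    obtain ⟨c, rfl⟩ := Submodule.mem_span_singleton.mp hu
    refine ⟨(c / ⟪w, v⟫) • v, ?_, ?_⟩
    · rw [real_inner_smul_left, hvx, mul_zero]
    · rw [real_inner_smul_right, div_mul_cancel₀ c hwv]

end Independence

/-- ψ/‖ψ‖ restricted to the sphere through `x` is a submersion at `x`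
iff `ω(x)` and `x` are linearly independent. -/
theorem submersion_iff_omega_independent (m : ℕ)
    (P Q : EuclideanSpace ℝ (Fin m) → ℝ) (hP : ContDiff ℝ 1 P) (hQ : ContDiff ℝ 1 Q)
    (ψ : EuclideanSpace ℝ (Fin m) → EuclideanSpace ℝ (Fin 2))
    (hψ : ∀ y, ψ y 0 = P y ∧ ψ y 1 = Q y)
    (Φ : EuclideanSpace ℝ (Fin m) → EuclideanSpace ℝ (Fin 2))
    (hΦ : ∀ y, Φ y = ‖ψ y‖⁻¹ • ψ y)
    (ω : EuclideanSpace ℝ (Fin m) → EuclideanSpace ℝ (Fin m))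
    (hω : ∀ y, ω y = P y • gradient Q y - Q y • gradient P y)
    (x : EuclideanSpace ℝ (Fin m)) (hxV : ψ x ≠ 0) (hx : x ≠ 0) :
    (∀ u : EuclideanSpace ℝ (Fin 2), ⟪u, Φ x⟫ = 0 →
        ∃ v : EuclideanSpace ℝ (Fin m), ⟪v, x⟫ = 0 ∧ fderiv ℝ Φ x v = u) ↔
      LinearIndependent ℝ ![ω x, x] := by
  have hψ0 : (fun y => ψ y 0) = P := funext fun y => (hψ y).1
  have hψ1 : (fun y => ψ y 1) = Q := funext fun y => (hψ y).2
  have hψd : DifferentiableAt ℝ ψ x := by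
    rw [differentiableAt_euclidean]
    intro i
    fin_cases i
    · exact hψ0 ▸ hP.differentiable one_ne_zero x
    · exact hψ1 ▸ hQ.differentiable one_ne_zero x
  have hrot_dψ : ∀ v, ⟪rightAngleRot (ψ x), fderiv ℝ ψ x v⟫ = ⟪ω x, v⟫ := by
    intro v
    rw [inner_rightAngleRot_left, fderiv_euclidean_apply hψd, fderiv_euclidean_apply hψd, hψ0, hψ1,
      (hψ x).1, (hψ x).2, hω, inner_sub_left, real_inner_smul_left, real_inner_smul_left,
      inner_gradient_left, inner_gradient_left]
  set n := (‖ψ x‖ ^ 3)⁻¹ • rightAngleRot (ψ x)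
  have hDΦ : ∀ v, fderiv ℝ Φ x v = ⟪ω x, v⟫ • n := by
    intro v
    have hΦd : HasFDerivAt Φ (((‖ψ x‖ ^ 3)⁻¹ • (innerSL ℝ (rightAngleRot (ψ x))).smulRight
        (rightAngleRot (ψ x))).comp (fderiv ℝ ψ x)) x := by
      rw [funext hΦ]
      exact (hasFDerivAt_norm_inv_smul_fin_two hxV).comp x hψd.hasFDerivAt
    rw [hΦd.fderiv]
    simp [n, hrot_dψ, smul_smul, mul_comm]
  have hΦorth : ∀ u, ⟪u, Φ x⟫ = 0 ↔ u ∈ ℝ ∙ n := by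
    intro u
    rw [← Submodule.mem_orthogonal_singleton_iff_inner_left, hΦ,
      Submodule.span_singleton_smul_eq (by simpa using hxV),
      orthogonal_span_singleton_eq_span_rightAngleRot hxV,
      Submodule.span_singleton_smul_eq (by simpa using hxV)]
  simp only [hΦorth, hDΦ]
  exact forall_mem_span_singleton_exists_inner_smul_eq_iff
    (smul_ne_zero (by simpa using hxV) (rightAngleRot_ne_zero hxV)) hx
end

section
/- The map ψ : ℝ³ → ℝ², ψ(x,y,z) = (z(x²+y²+z²), y − x³), has an isolated critical point at the origin: the Jacobian matrix of ψ has rank 2 at every point (x,y,z) ≠ (0,0,0). -/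
/-!
In the columns `∂/∂z`, `∂/∂y` the Jacobian of `ψ = (P, Q)` is triangular: `∂Q/∂z = 0`,
`∂Q/∂y = 1`, and `∂P/∂z = x² + y² + 3z²` vanishes only at the origin.
-/

open ContinuousLinearMap

theorem ContinuousLinearMap.pi_fin_two_surjective_of_triangular {𝕜 E : Type*} [Field 𝕜]
    [TopologicalSpace 𝕜] [AddCommGroup E] [TopologicalSpace E] [Module 𝕜 E]
    (f g : E →L[𝕜] 𝕜) {a b : E} (hfa : f a ≠ 0) (hga : g a = 0) (hgb : g b ≠ 0) :
    Function.Surjective (pi ![f, g]) := by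
  intro c
  set t := c 1 / g b
  refine ⟨((c 0 - t * f b) / f a) • a + t • b, ?_⟩
  ext i
  fin_cases i
  · simp [field]
  · simp [hga, t, hgb]

theorem sq_add_sq_add_three_mul_sq_ne_zero {v : Fin 3 → ℝ} (hv : v ≠ 0) :
    v 0 ^ 2 + v 1 ^ 2 + 3 * v 2 ^ 2 ≠ 0 := by
  contrapose! hv
  have h0 : v 0 = 0 := by nlinarith [sq_nonneg (v 0), sq_nonneg (v 1), sq_nonneg (v 2)]
  have h1 : v 1 = 0 := by nlinarith [sq_nonneg (v 0), sq_nonneg (v 1), sq_nonneg (v 2)]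
  have h2 : v 2 = 0 := by nlinarith [sq_nonneg (v 0), sq_nonneg (v 1), sq_nonneg (v 2)]
  ext i
  fin_cases i <;> assumption

variable (v : Fin 3 → ℝ)

-- `P = z(x²+y²+z²)` and `Q = y - x³` are the components of `ψ`.
def gradP : (Fin 3 → ℝ) →L[ℝ] ℝ :=
  (2 * v 0 * v 2) • proj 0 + (2 * v 1 * v 2) • proj 1 + (v 0 ^ 2 + v 1 ^ 2 + 3 * v 2 ^ 2) • proj 2

def gradQ : (Fin 3 → ℝ) →L[ℝ] ℝ :=
  (-3 * v 0 ^ 2) • proj 0 + proj 1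

theorem hasFDerivAt_P :
    HasFDerivAt (fun u : Fin 3 → ℝ ↦ u 2 * (u 0 ^ 2 + u 1 ^ 2 + u 2 ^ 2)) (gradP v) v := by
  have hp := fun i : Fin 3 ↦ hasFDerivAt_apply (𝕜 := ℝ) i v
  refine ((hp 2).mul ((((hp 0).pow 2).add ((hp 1).pow 2)).add ((hp 2).pow 2))).congr_fderiv ?_
  ext w
  simp [gradP]
  ring

theorem hasFDerivAt_Q : HasFDerivAt (fun u : Fin 3 → ℝ ↦ u 1 - u 0 ^ 3) (gradQ v) v := by
  have hp := fun i : Fin 3 ↦ hasFDerivAt_apply (𝕜 := ℝ) i v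
  refine ((hp 1).sub ((hp 0).pow 3)).congr_fderiv ?_
  ext w
  simp [gradQ]
  ring

theorem hasFDerivAt_psi :
    HasFDerivAt (fun u : Fin 3 → ℝ ↦ ![u 2 * (u 0 ^ 2 + u 1 ^ 2 + u 2 ^ 2), u 1 - u 0 ^ 3])
      (pi ![gradP v, gradQ v]) v := by
  refine hasFDerivAt_pi.2 fun i ↦ ?_
  fin_cases i
  · exact hasFDerivAt_P v
  · exact hasFDerivAt_Q v

/-- `ψ(x,y,z) = (z(x²+y²+z²), y − x³)` has an isolated critical point at
the origin: its differential has rank 2 (is surjective onto ℝ²) at every nonzero point. -/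
theorem example_isolated_critical_point
    (ψ : (Fin 3 → ℝ) → (Fin 2 → ℝ))
    (hψ : ∀ v, ψ v = ![v 2 * ((v 0) ^ 2 + (v 1) ^ 2 + (v 2) ^ 2), v 1 - (v 0) ^ 3]) :
    ∀ v : Fin 3 → ℝ, v ≠ 0 → Function.Surjective (fderiv ℝ ψ v) := by
  intro v hv
  rw [funext hψ, (hasFDerivAt_psi v).fderiv]
  refine (gradP v).pi_fin_two_surjective_of_triangular (gradQ v)
    (a := Pi.single 2 1) (b := Pi.single 1 1) ?_ ?_ ?_
  · simpa [gradP] using sq_add_sq_add_three_mul_sq_ne_zero hv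
  · simp [gradQ]
  · simp [gradQ]
end

section
/- The map ψ : ℝ³ → ℝ², ψ(x,y,z) = (y(x²+y²+z²) + x², x), has an isolated critical point at the origin: its Jacobian has rank 2 at every nonzero point of some neighbourhood of 0, and its zero set V = ψ⁻¹(0) near 0 is {x = 0, y = 0} (the z-axis), so the link K_ε = V ∩ S²_ε is a pair of antipodal points. -/
/-!
The zero set of `ψ` is the whole `z`-axis: on `x = 0` the first component is `y (y² + z²)`,
which vanishes only for `y = 0`. The Jacobian is surjective away from the origin because its
`∂/∂y` and `∂/∂x` columns are `(x² + 3y² + z², 0)` and `(*, 1)`, a triangular minor that is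
invertible as soon as `(x, y, z) ≠ 0`. The link is then a line through `0` cut by a sphere.
-/

open Function Set EuclideanSpace

theorem LinearMap.surjective_of_triangular {K M : Type*} [Field K] [AddCommGroup M] [Module K M]
    (f : M →ₗ[K] Fin 2 → K) {e₁ e₂ : M} (h₁ : f e₁ 0 ≠ 0) (h₁₂ : f e₁ 1 = 0) (h₂ : f e₂ 1 ≠ 0) :
    Surjective f := by
  intro w
  set b := w 1 / f e₂ 1
  set a := (w 0 - b * f e₂ 0) / f e₁ 0
  have h0 : a * f e₁ 0 + b * f e₂ 0 = w 0 := by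
    simp only [a]
    field_simp
    ring
  have h1 : b * f e₂ 1 = w 1 := div_mul_cancel₀ _ h₂
  refine ⟨a • e₁ + b • e₂, ?_⟩
  ext i
  fin_cases i <;> simp [h₁₂, h0, h1]

theorem range_smul_inter_sphere {E : Type*} [NormedAddCommGroup E] [NormedSpace ℝ E] {e : E}
    (he : ‖e‖ = 1) {ε : ℝ} (hε : 0 ≤ ε) :
    (range fun t : ℝ => t • e) ∩ Metric.sphere 0 ε = {ε • e, -(ε • e)} := by
  ext v
  simp only [mem_inter_iff, mem_range, mem_sphere_zero_iff_norm, mem_insert_iff,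
    mem_singleton_iff]
  constructor
  · rintro ⟨⟨t, rfl⟩, ht⟩
    rw [norm_smul, he, mul_one, Real.norm_eq_abs] at ht
    rcases abs_eq hε |>.mp ht with rfl | rfl
    · exact Or.inl rfl
    · exact Or.inr (neg_smul _ _)
  · rintro (rfl | rfl)
    · exact ⟨⟨ε, rfl⟩, by rw [norm_smul, he, mul_one, Real.norm_of_nonneg hε]⟩
    · exact ⟨⟨-ε, neg_smul _ _⟩, by rw [norm_neg, norm_smul, he, mul_one, Real.norm_of_nonneg hε]⟩

theorem fderiv_euclideanSpace_apply {n : Type*} [Fintype n] (v : EuclideanSpace ℝ n) (i : n) :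
    fderiv ℝ (fun v : EuclideanSpace ℝ n => v i) v = proj i :=
  (proj (𝕜 := ℝ) i).fderiv

theorem setOf_apply_zero_and_apply_one_eq_zero :
    {v : EuclideanSpace ℝ (Fin 3) | v 0 = 0 ∧ v 1 = 0} = range fun t : ℝ => t • single 2 1 := by
  ext v
  constructor
  · rintro ⟨h0, h1⟩
    refine ⟨v 2, ?_⟩
    ext i
    fin_cases i <;> simp [h0, h1]
  · rintro ⟨t, rfl⟩
    simp

theorem eq_zero_of_mul_sq_add_sq_eq_zero {y z : ℝ} (h : y * (y ^ 2 + z ^ 2) = 0) : y = 0 := by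
  rcases mul_eq_zero.mp h with hy | hyz
  · exact hy
  · exact pow_eq_zero_iff two_ne_zero |>.mp (by nlinarith [sq_nonneg y, sq_nonneg z])

namespace Example2

noncomputable def ψ (v : EuclideanSpace ℝ (Fin 3)) : Fin 2 → ℝ :=
  ![v 1 * ((v 0) ^ 2 + (v 1) ^ 2 + (v 2) ^ 2) + (v 0) ^ 2, v 0]

theorem ψ_eq_zero_iff (v : EuclideanSpace ℝ (Fin 3)) : ψ v = 0 ↔ v 0 = 0 ∧ v 1 = 0 := by
  simp only [ψ, funext_iff, Fin.forall_fin_two, Matrix.cons_val_zero, Matrix.cons_val_one,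
    Pi.zero_apply]
  constructor
  · rintro ⟨h, hx⟩
    refine ⟨hx, eq_zero_of_mul_sq_add_sq_eq_zero (z := v 2) ?_⟩
    simpa [hx] using h
  · rintro ⟨hx, hy⟩
    simp [hx, hy]

theorem differentiable_ψ : Differentiable ℝ ψ := by
  rw [differentiable_pi, Fin.forall_fin_two]
  constructor <;> simp only [ψ, Matrix.cons_val_zero, Matrix.cons_val_one] <;> fun_prop

theorem fderiv_ψ_apply (v w : EuclideanSpace ℝ (Fin 3)) (i : Fin 2) :
    fderiv ℝ ψ v w i = fderiv ℝ (fun x => ψ x i) v w := by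
  rw [fderiv_apply differentiable_ψ.differentiableAt]
  rfl

theorem fderiv_ψ_single_one_apply_zero (v : EuclideanSpace ℝ (Fin 3)) :
    fderiv ℝ ψ v (single 1 1) 0 = v 0 ^ 2 + 3 * v 1 ^ 2 + v 2 ^ 2 := by
  simp (disch := fun_prop) only [fderiv_ψ_apply, ψ, Matrix.cons_val_zero, fderiv_fun_add,
    fderiv_fun_mul, fderiv_fun_pow, fderiv_euclideanSpace_apply, add_apply, smul_apply,
    PiLp.proj_apply, PiLp.single_apply, Fin.reduceEq, ↓reduceIte, smul_eq_mul, nsmul_eq_mul]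
  ring

theorem fderiv_ψ_single_one_apply_one (v : EuclideanSpace ℝ (Fin 3)) :
    fderiv ℝ ψ v (single 1 1) 1 = 0 := by
  simp [fderiv_ψ_apply, ψ, fderiv_euclideanSpace_apply]

theorem fderiv_ψ_single_zero_apply_one (v : EuclideanSpace ℝ (Fin 3)) :
    fderiv ℝ ψ v (single 0 1) 1 = 1 := by
  simp [fderiv_ψ_apply, ψ, fderiv_euclideanSpace_apply]

theorem surjective_fderiv_ψ {v : EuclideanSpace ℝ (Fin 3)} (hv : v ≠ 0) :
    Surjective (fderiv ℝ ψ v) := by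
  have hpos : 0 < v 0 ^ 2 + 3 * v 1 ^ 2 + v 2 ^ 2 := by
    have hnorm := EuclideanSpace.real_norm_sq_eq v
    simp only [Fin.sum_univ_three] at hnorm
    nlinarith [norm_pos_iff.mpr hv, sq_nonneg (v 1)]
  refine LinearMap.surjective_of_triangular
    (fderiv ℝ ψ v : EuclideanSpace ℝ (Fin 3) →ₗ[ℝ] Fin 2 → ℝ) (e₁ := single 1 1)
    (e₂ := single 0 1) ?_ ?_ ?_
  · simpa [fderiv_ψ_single_one_apply_zero] using hpos.ne'
  · exact fderiv_ψ_single_one_apply_one v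
  · simp [fderiv_ψ_single_zero_apply_one]

end Example2

/-- `ψ(x,y,z) = (y(x²+y²+z²)+x², x)` has an isolated critical point at the
origin, its zero set near 0 is the z-axis, and the link is a pair of antipodal points. -/
theorem example2_isolated_critical_point_and_link
    (ψ : EuclideanSpace ℝ (Fin 3) → Fin 2 → ℝ)
    (hψ : ∀ v, ψ v = ![v 1 * ((v 0) ^ 2 + (v 1) ^ 2 + (v 2) ^ 2) + (v 0) ^ 2, v 0])
    (V : Set (EuclideanSpace ℝ (Fin 3))) (hV : V = {v | ψ v = 0}) :
    (∃ U ∈ nhds (0 : EuclideanSpace ℝ (Fin 3)),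
        (∀ v ∈ U, v ≠ 0 → Function.Surjective (fderiv ℝ ψ v)) ∧
        V ∩ U = {v | v 0 = 0 ∧ v 1 = 0} ∩ U) ∧
      ∀ ε : ℝ, 0 < ε → ∃ c : EuclideanSpace ℝ (Fin 3), c ≠ -c ∧
        V ∩ Metric.sphere (0 : EuclideanSpace ℝ (Fin 3)) ε = {c, -c} := by
  obtain rfl : ψ = Example2.ψ := funext hψ
  have hV_axis : V = {v | v 0 = 0 ∧ v 1 = 0} := hV.trans (Set.ext Example2.ψ_eq_zero_iff)
  refine ⟨⟨univ, Filter.univ_mem, fun v _ hv => Example2.surjective_fderiv_ψ hv,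
      by rw [hV_axis]⟩,
    fun ε hε => ⟨ε • single 2 1, ?_, ?_⟩⟩
  · intro h
    have h2 : ε = -ε := by simpa using congrArg (· 2) h
    linarith
  · rw [hV_axis, setOf_apply_zero_and_apply_one_eq_zero,
      range_smul_inter_sphere (by simp) hε.le]
end

section
/- For ψ = (P, Q) : ℝ³ → ℝ² with P = y(x²+y²+z²) + x² and Q = x, define M = {(x,y,z) ∉ V : ∃λ ≠ 0, P∇Q − Q∇P = λ(x,y,z)}. Then the closure of M contains the origin; in fact, M ∩ {z = 0} contains points on the curve (x²+y²)² = yx² \ {0} arbitrarily close to 0. -/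
/-!
At a point `(x, y, 0)` one computes `P∇Q − Q∇P = (y³ − x²y − x², −x(x² + 3y²), 0)`. For `y ≠ 0`
the second coordinate forces `λ = −x(x² + 3y²)/y`, and the first coordinate then matches `λx`
exactly when `(x² + y²)² = yx²`. This curve reaches the origin along `t ↦ (t, t²)/(1 + t²)²`,
whose points have norm at most `t` and lie off `V` because `x ≠ 0`.
-/

local notation "ℝ³" => EuclideanSpace ℝ (Fin 3)

theorem EuclideanSpace.gradient_apply {ι : Type*} [Fintype ι] [DecidableEq ι]
    (f : EuclideanSpace ℝ ι → ℝ) (v : EuclideanSpace ℝ ι) (i : ι) :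
    gradient f v i = fderiv ℝ f v (EuclideanSpace.single i 1) := by
  rw [← inner_gradient_left, EuclideanSpace.inner_single_right]
  simp

theorem EuclideanSpace.gradient_coord {ι : Type*} [Fintype ι] [DecidableEq ι]
    (i : ι) (v : EuclideanSpace ℝ ι) :
    gradient (fun w : EuclideanSpace ℝ ι => w i) v = EuclideanSpace.single i 1 := by
  ext j
  have hi : HasFDerivAt (fun w : EuclideanSpace ℝ ι => w i)
      (EuclideanSpace.proj i : EuclideanSpace ℝ ι →L[ℝ] ℝ) v :=
    (EuclideanSpace.proj i : EuclideanSpace ℝ ι →L[ℝ] ℝ).hasFDerivAt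
  rw [EuclideanSpace.gradient_apply, hi.fderiv]
  simp [PiLp.single_apply, eq_comm]

theorem gradient_example2_P (v : ℝ³) :
    gradient (fun w : ℝ³ => w 1 * (w 0 ^ 2 + w 1 ^ 2 + w 2 ^ 2) + w 0 ^ 2) v =
      !₂[2 * v 0 * v 1 + 2 * v 0, v 0 ^ 2 + 3 * v 1 ^ 2 + v 2 ^ 2, 2 * v 1 * v 2] := by
  have hcoord (i : Fin 3) :
      HasFDerivAt (fun w : ℝ³ => w i) (EuclideanSpace.proj i : ℝ³ →L[ℝ] ℝ) v :=
    (EuclideanSpace.proj i : ℝ³ →L[ℝ] ℝ).hasFDerivAt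
  have hP : HasFDerivAt (fun w : ℝ³ => w 1 * (w 0 ^ 2 + w 1 ^ 2 + w 2 ^ 2) + w 0 ^ 2) _ v :=
    ((hcoord 1).mul ((((hcoord 0).pow 2).add ((hcoord 1).pow 2)).add ((hcoord 2).pow 2))).add
      ((hcoord 0).pow 2)
  ext i
  rw [EuclideanSpace.gradient_apply, hP.fderiv]
  fin_cases i <;>
    simp only [Fin.isValue, Fin.zero_eta, Fin.mk_one, Fin.reduceFinMk, Fin.reduceEq,
      add_apply, smul_apply, PiLp.proj_apply,
      PiLp.single_apply, Pi.add_apply, smul_eq_mul, nsmul_eq_mul, Nat.add_one_sub_one, pow_one,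
      Matrix.cons_val, if_true, if_false] <;>
    ring

theorem smul_gradient_sub_smul_gradient_eq_smul_of_mem_curve {P Q : ℝ³ → ℝ}
    (hP : ∀ v, P v = v 1 * ((v 0) ^ 2 + (v 1) ^ 2 + (v 2) ^ 2) + (v 0) ^ 2)
    (hQ : ∀ v, Q v = v 0) {v : ℝ³} (hv1 : v 1 ≠ 0) (hv2 : v 2 = 0)
    (hcurve : ((v 0) ^ 2 + (v 1) ^ 2) ^ 2 = v 1 * (v 0) ^ 2) :
    P v • gradient Q v - Q v • gradient P v = (-(v 0 * (v 0 ^ 2 + 3 * v 1 ^ 2)) / v 1) • v := by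
  obtain rfl : P = _ := funext hP
  obtain rfl : Q = _ := funext hQ
  rw [gradient_example2_P, EuclideanSpace.gradient_coord]
  ext i
  fin_cases i <;>
    simp only [Fin.isValue, Fin.zero_eta, Fin.mk_one, Fin.reduceFinMk, PiLp.sub_apply,
      PiLp.smul_apply, PiLp.single_apply, smul_eq_mul, Matrix.cons_val, hv2, if_true, if_false,
      Fin.reduceEq]
  · field_simp
    linear_combination hcurve
  · field_simp
    ring
  · ring

-- Substituting `y = t x` into `(x² + y²)² = y x²` gives `x = t / (1 + t²)²`.
noncomputable def curvePoint (t : ℝ) : ℝ³ := !₂[t / (1 + t ^ 2) ^ 2, t ^ 2 / (1 + t ^ 2) ^ 2, 0]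

theorem curvePoint_mem_curve (t : ℝ) :
    ((curvePoint t 0) ^ 2 + (curvePoint t 1) ^ 2) ^ 2 = curvePoint t 1 * (curvePoint t 0) ^ 2 := by
  simp only [curvePoint, PiLp.toLp_apply, Matrix.cons_val_zero, Matrix.cons_val_one]
  field_simp

theorem norm_curvePoint_le {t : ℝ} (ht : 0 ≤ t) : ‖curvePoint t‖ ≤ t := by
  have h : ‖curvePoint t‖ ^ 2 = t ^ 2 / (1 + t ^ 2) ^ 3 := by
    simp only [curvePoint, EuclideanSpace.real_norm_sq_eq, Fin.sum_univ_three,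
      Matrix.cons_val_zero, Matrix.cons_val_one, Matrix.cons_val, ne_eq, OfNat.ofNat_ne_zero,
      not_false_eq_true, zero_pow, add_zero]
    field_simp
  refine abs_le_of_sq_le_sq' ?_ ht |>.2
  rw [h]
  exact div_le_self (sq_nonneg t) (one_le_pow₀ (by nlinarith))

theorem curvePoint_pos {t : ℝ} (ht : 0 < t) : 0 < curvePoint t 0 ∧ 0 < curvePoint t 1 := by
  simp only [curvePoint, PiLp.toLp_apply, Matrix.cons_val_zero, Matrix.cons_val_one]
  constructor <;> positivity

/-- for `P = y(x²+y²+z²)+x²`, `Q = x`, the origin lies in the closure of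
`M = {x ∉ V : ∃ λ ≠ 0, P∇Q − Q∇P = λx}`; in fact `M ∩ {z = 0}` contains points of the
curve `(x²+y²)² = yx²` arbitrarily close to `0`. -/
theorem example2_M_accumulates_at_origin
    (P Q : EuclideanSpace ℝ (Fin 3) → ℝ)
    (hP : ∀ v, P v = v 1 * ((v 0) ^ 2 + (v 1) ^ 2 + (v 2) ^ 2) + (v 0) ^ 2)
    (hQ : ∀ v, Q v = v 0)
    (V : Set (EuclideanSpace ℝ (Fin 3))) (hV : V = {v | P v = 0 ∧ Q v = 0})
    (M : Set (EuclideanSpace ℝ (Fin 3)))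
    (hM : M = {v | v ∉ V ∧ ∃ lam : ℝ, lam ≠ 0 ∧
      P v • gradient Q v - Q v • gradient P v = lam • v}) :
    (0 : EuclideanSpace ℝ (Fin 3)) ∈ closure M ∧
      ∀ δ : ℝ, 0 < δ → ∃ v ∈ M, v ≠ 0 ∧ ‖v‖ < δ ∧ v 2 = 0 ∧
        ((v 0) ^ 2 + (v 1) ^ 2) ^ 2 = v 1 * (v 0) ^ 2 := by
  have hmem {t : ℝ} (ht : 0 < t) : curvePoint t ∈ M := by
    obtain ⟨hx, hy⟩ := curvePoint_pos ht
    subst hM hV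
    refine ⟨fun hV => hx.ne' ((hQ _).symm.trans hV.2), _, ?_,
      smul_gradient_sub_smul_gradient_eq_smul_of_mem_curve hP hQ hy.ne' rfl (curvePoint_mem_curve t)⟩
    exact div_ne_zero (neg_ne_zero.2 (by positivity)) hy.ne'
  have hsmall (δ : ℝ) (hδ : 0 < δ) : ∃ v ∈ M, v ≠ 0 ∧ ‖v‖ < δ ∧ v 2 = 0 ∧
      ((v 0) ^ 2 + (v 1) ^ 2) ^ 2 = v 1 * (v 0) ^ 2 :=
    ⟨curvePoint (δ / 2), hmem (half_pos hδ),
      fun h => (curvePoint_pos (half_pos hδ)).1.ne' (by rw [h]; rfl),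
      (norm_curvePoint_le (half_pos hδ).le).trans_lt (half_lt_self hδ), rfl,
      curvePoint_mem_curve _⟩
  refine ⟨Metric.mem_closure_iff.2 fun ε hε => ?_, hsmall⟩
  obtain ⟨v, hvM, -, hvε, -⟩ := hsmall ε hε
  exact ⟨v, hvM, by rwa [dist_zero_left]⟩
end
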